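/- arXiv:2602.14715 — 4 statements merged into one kernel-verified Lean document; each statement's English description precedes it below -/
import Mathlib

section
/- Let $(L_{-1} \oplus L_0, l_1, l_2, l_3 = 0)$ be a strict Lie 2-algebra. Then setting $\mathfrak{h} = L_{-1}$, $\mathfrak{g} = L_0$, $\tau = l_1$, $r(x)(a) = l_2^m(x,a)$, $[x,y]_{\mathfrak{g}} = l_2^p(x,y)$, $[a,b]_{\mathfrak{h}} = l_2^m(a, l_1(b))$ yields a Lie algebra crossed module: in particular $[\cdot,\cdot]_{\mathfrak{h}}$ is a Lie bracket on $\mathfrak{h}$, each $r(x)$ is a derivation of $\mathfrak{h}$, $r$ is a Lie algebra morphism into $\mathrm{Der}(\mathfrak{h})$, and the two crossed-module equivariance conditions hold. -/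
/-- A Lie 2-algebra over `ℝ` with underlying graded vector space `Lm ⊕ L0`
(`Lm` in degree `-1`, `L0` in degree `0`).  The mixed bracket is encoded by
`l2m : L0 →ₗ Lm →ₗ Lm`, with `l2m x a = l₂(x, a)` and `l₂(a, x) = - l2m x a`. -/
structure LieTwoAlgebra (Lm L0 : Type*) [AddCommGroup Lm] [Module ℝ Lm]
    [AddCommGroup L0] [Module ℝ L0] where
  l1 : Lm →ₗ[ℝ] L0
  l2p : L0 →ₗ[ℝ] L0 →ₗ[ℝ] L0
  l2m : L0 →ₗ[ℝ] Lm →ₗ[ℝ] Lm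
  l3 : L0 →ₗ[ℝ] L0 →ₗ[ℝ] L0 →ₗ[ℝ] Lm
  l2p_anti : ∀ x y, l2p x y = - l2p y x
  l3_anti12 : ∀ x y z, l3 x y z = - l3 y x z
  l3_anti23 : ∀ x y z, l3 x y z = - l3 x z y
  rel2 : ∀ x a, l1 (l2m x a) = l2p x (l1 a)
  rel3 : ∀ a b, l2m (l1 a) b = - l2m (l1 b) a
  rel4 : ∀ x y z, l1 (l3 x y z)
      = -(l2p (l2p x y) z + l2p (l2p y z) x + l2p (l2p z x) y)
  rel5 : ∀ a x y, l3 (l1 a) x y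
      = - l2m (l2p x y) a + l2m x (l2m y a) - l2m y (l2m x a)
  rel6 : ∀ x y z t,
      l3 (l2p x y) z t - l3 (l2p x z) y t + l3 (l2p x t) y z
        + l3 (l2p y z) x t - l3 (l2p y t) x z + l3 (l2p z t) x y
      = - l2m t (l3 x y z) + l2m z (l3 x y t) - l2m y (l3 x z t) + l2m x (l3 y z t)

/-- A strict Lie 2-algebra (`l₃ = 0`) yields a Lie algebra
crossed module, with `𝔥 = L₋₁`, `𝔤 = L₀`, `τ = l₁`, `r(x)(a) = l₂ᵐ(x,a)`,
`[x,y]_𝔤 = l₂ᵖ(x,y)` and `[a,b]_𝔥 = l₂ᵐ(a, l₁(b)) = l₂ᵐ(l₁(a), b)`: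
the degree 0 bracket satisfies Jacobi, `[·,·]_𝔥` is a Lie bracket,
each `r(x)` is a derivation, `r` is a morphism into derivations with the
commutator bracket, and the two crossed module equivariance conditions hold. -/
theorem strictLieTwoAlgebra_toCrossedModule {Lm L0 : Type*}
    [AddCommGroup Lm] [Module ℝ Lm] [AddCommGroup L0] [Module ℝ L0]
    (T : LieTwoAlgebra Lm L0)
    (hstrict : ∀ x y z : L0, T.l3 x y z = 0) :
    -- `𝔤 = L₀` is a Lie algebra :
    (∀ x y z : L0,
        T.l2p (T.l2p x y) z + T.l2p (T.l2p y z) x + T.l2p (T.l2p z x) y = 0)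
    -- `[·,·]_𝔥` is antisymmetric :
    ∧ (∀ a b : Lm, T.l2m (T.l1 a) b = - T.l2m (T.l1 b) a)
    -- `[·,·]_𝔥` satisfies the Jacobi identity :
    ∧ (∀ a b c : Lm,
        T.l2m (T.l1 (T.l2m (T.l1 a) b)) c + T.l2m (T.l1 (T.l2m (T.l1 b) c)) a
          + T.l2m (T.l1 (T.l2m (T.l1 c) a)) b = 0)
    -- each `r(x)` is a derivation of `[·,·]_𝔥` :
    ∧ (∀ (x : L0) (a b : Lm),
        T.l2m x (T.l2m (T.l1 a) b)
          = T.l2m (T.l1 (T.l2m x a)) b + T.l2m (T.l1 a) (T.l2m x b))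
    -- `r` is a Lie algebra morphism into `Der(𝔥)` with the commutator bracket :
    ∧ (∀ (x y : L0) (a : Lm),
        T.l2m (T.l2p x y) a = T.l2m x (T.l2m y a) - T.l2m y (T.l2m x a))
    -- equivariance : `τ(r(x)(a)) = [x, τ(a)]_𝔤` :
    ∧ (∀ (x : L0) (a : Lm), T.l1 (T.l2m x a) = T.l2p x (T.l1 a))
    -- Peiffer identity : `r(τ(a))(b) = [a,b]_𝔥` :
    ∧ (∀ a b : Lm, T.l2m (T.l1 a) b = T.l2m (T.l1 a) b) := by
  -- Lie morphism into derivations, from rel5 with l3 = 0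
  have hmor : ∀ (x y : L0) (a : Lm),
      T.l2m (T.l2p x y) a = T.l2m x (T.l2m y a) - T.l2m y (T.l2m x a) := by
    intro x y a
    have h := T.rel5 a x y
    rw [hstrict] at h
    have h' : (0 : Lm) - (- T.l2m (T.l2p x y) a + T.l2m x (T.l2m y a)
        - T.l2m y (T.l2m x a)) = 0 := by rw [← h]; abel
    have h2 : T.l2m (T.l2p x y) a
        - (T.l2m x (T.l2m y a) - T.l2m y (T.l2m x a)) = 0 := by
      rw [← h']; abel
    exact sub_eq_zero.mp h2
  -- derivation property
  have hder : ∀ (x : L0) (a b : Lm),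
      T.l2m x (T.l2m (T.l1 a) b)
        = T.l2m (T.l1 (T.l2m x a)) b + T.l2m (T.l1 a) (T.l2m x b) := by
    intro x a b
    have h := hmor x (T.l1 a) b
    rw [← T.rel2 x a] at h
    rw [h]; abel
  -- Jacobi for the degree 0 bracket
  have hjac : ∀ x y z : L0,
      T.l2p (T.l2p x y) z + T.l2p (T.l2p y z) x + T.l2p (T.l2p z x) y = 0 := by
    intro x y z
    have h := T.rel4 x y z
    rw [hstrict, map_zero] at h
    exact neg_eq_zero.mp h.symm
  -- Jacobi for the bracket on Lm
  have hjach : ∀ a b c : Lm,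
      T.l2m (T.l1 (T.l2m (T.l1 a) b)) c + T.l2m (T.l1 (T.l2m (T.l1 b) c)) a
        + T.l2m (T.l1 (T.l2m (T.l1 c) a)) b = 0 := by
    intro a b c
    -- key: X_{[a,b]} c = X_a (X_b c) + X_b (X_c a)
    have key : ∀ a b c : Lm,
        T.l2m (T.l1 (T.l2m (T.l1 a) b)) c
          = T.l2m (T.l1 a) (T.l2m (T.l1 b) c)
            + T.l2m (T.l1 b) (T.l2m (T.l1 c) a) := by
      intro a b c
      rw [T.rel2, hmor, T.rel3 a c, map_neg]
      abel
    have hS : T.l2m (T.l1 a) (T.l2m (T.l1 b) c) + T.l2m (T.l1 b) (T.l2m (T.l1 c) a)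
        + T.l2m (T.l1 c) (T.l2m (T.l1 a) b) = 0 := by
      have h := key a b c
      rw [T.rel3 (T.l2m (T.l1 a) b) c] at h
      rw [← h]; abel
    rw [key a b c, key b c a, key c a b]
    have hsplit :
        T.l2m (T.l1 a) (T.l2m (T.l1 b) c) + T.l2m (T.l1 b) (T.l2m (T.l1 c) a)
          + (T.l2m (T.l1 b) (T.l2m (T.l1 c) a) + T.l2m (T.l1 c) (T.l2m (T.l1 a) b))
          + (T.l2m (T.l1 c) (T.l2m (T.l1 a) b) + T.l2m (T.l1 a) (T.l2m (T.l1 b) c))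
        = (T.l2m (T.l1 a) (T.l2m (T.l1 b) c) + T.l2m (T.l1 b) (T.l2m (T.l1 c) a)
            + T.l2m (T.l1 c) (T.l2m (T.l1 a) b))
          + (T.l2m (T.l1 a) (T.l2m (T.l1 b) c) + T.l2m (T.l1 b) (T.l2m (T.l1 c) a)
            + T.l2m (T.l1 c) (T.l2m (T.l1 a) b)) := by abel
    rw [hsplit, hS, add_zero]
  exact ⟨hjac, T.rel3, hjach, hder, hmor, T.rel2, fun a b => rfl⟩
end

section
/- Let $(M, \omega)$ be a 2-plectic manifold (i.e., $\omega$ is a closed nondegenerate 3-form). If $\alpha$ is a Hamiltonian 1-form with Hamiltonian vector field $X_\alpha$ (so $d\alpha = -\iota_{X_\alpha}\omega$) and $f$ is a Hamiltonian function with $df = -\iota_v \omega$ for some bivector field $v$, then $d(\iota_{v \wedge X_\alpha} \omega) = -\iota_{[v, X_\alpha]_S} \omega$; in particular $\iota_{v\wedge X_\alpha}\omega$ is again a Hamiltonian function. -/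
/-- On a 2-plectic manifold `(M, ω)` (`ω` closed), if `α` is a
Hamiltonian 1-form with `dα = -ι_{X_α} ω` and `f` Hamiltonian with
`df = -ι_v ω` for a bivector `v`, then
`d(ι_{v ∧ X_α} ω) = - ι_{[v, X_α]_S} ω` (here `ι_{v∧X_α}ω = ι_{X_α} ι_v ω` and
`[v, X_α]_S = - b X_α v`); in particular `ι_{v∧X_α}ω` is again a Hamiltonian
function.  Abstract Cartan calculus: `d∘d = 0`, `dω = 0`, and the commutation
rule `𝓛_X ∘ ι₂ v - ι₂ v ∘ 𝓛_X = ι₂ (b X v)` with `𝓛_X = d ι₁ X + ι₁ X d`. -/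
theorem mixed_bracket_hamiltonian (X1 X2 Ω : Type*)
    [AddCommGroup X1] [Module ℝ X1] [AddCommGroup X2] [Module ℝ X2]
    [AddCommGroup Ω] [Module ℝ Ω]
    (d : Ω →ₗ[ℝ] Ω) (ι1 : X1 →ₗ[ℝ] Module.End ℝ Ω) (ι2 : X2 →ₗ[ℝ] Module.End ℝ Ω)
    (b : X1 →ₗ[ℝ] X2 →ₗ[ℝ] X2) (ω : Ω)
    (hdd : ∀ η : Ω, d (d η) = 0) (hdω : d ω = 0)
    (hcomm : ∀ (X : X1) (v : X2) (η : Ω),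
      (d (ι1 X (ι2 v η)) + ι1 X (d (ι2 v η)))
          - ι2 v (d (ι1 X η) + ι1 X (d η))
        = ι2 (b X v) η)
    (X : X1) (α f : Ω) (v : X2)
    (hα : d α = - ι1 X ω) (hf : d f = - ι2 v ω) :
    d (ι1 X (ι2 v ω)) = ι2 (b X v) ω
      ∧ ∃ u : X2, d (ι1 X (ι2 v ω)) = - ι2 u ω := by
  have h1 : d (ι2 v ω) = 0 := by
    have : ι2 v ω = -(d f) := by rw [hf, neg_neg]
    rw [this, map_neg, hdd, neg_zero]
  have h2 : d (ι1 X ω) = 0 := by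
    have : ι1 X ω = -(d α) := by rw [hα, neg_neg]
    rw [this, map_neg, hdd, neg_zero]
  have key := hcomm X v ω
  simp only [h1, hdω, h2, map_zero, add_zero, sub_zero] at key
  refine ⟨key, -(b X v), ?_⟩
  simp [key]
end

section
/- Let $(M,\omega)$ be a 2-plectic manifold. The map $I = (I_1, I_2)$ with $I_{1,0} = \mathrm{id}$ on $\Omega^1_{Ham}(M)$, $I_{1,-1}(\tilde{f}) = (\tilde{f}, (0,0))$, and $I_2 = 0$ defines an injective strict Lie 2-algebra morphism from Rogers's Lie 2-algebra $\mathsf{L^2(M,\omega)}$ to Delgado's Lie 2-algebra $\mathsf{\widetilde{D^2(M,\omega)}}$. Likewise $\Phi$ with $\Phi_{1,0} = \mathrm{id}$, $\Phi_{1,-1} = pr_1$, $\Phi_2 = 0$ is a surjective Lie 2-morphism in the other direction, and $\Phi \circ I = \mathrm{id}$. -/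
/-- A morphism of Lie 2-algebras, given by its components
`F0` (degree 0), `Fm` (degree -1) and the bilinear `F2`. -/
structure LieTwoMorphism {Lm L0 Lm' L0' : Type*}
    [AddCommGroup Lm] [Module ℝ Lm] [AddCommGroup L0] [Module ℝ L0]
    [AddCommGroup Lm'] [Module ℝ Lm'] [AddCommGroup L0'] [Module ℝ L0']
    (T : LieTwoAlgebra Lm L0) (T' : LieTwoAlgebra Lm' L0') where
  F0 : L0 →ₗ[ℝ] L0'
  Fm : Lm →ₗ[ℝ] Lm'
  F2 : L0 →ₗ[ℝ] L0 →ₗ[ℝ] Lm'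
  F2_anti : ∀ x y, F2 x y = - F2 y x
  A1 : ∀ a, T'.l1 (Fm a) = F0 (T.l1 a)
  A2 : ∀ x y, T'.l1 (F2 x y) = F0 (T.l2p x y) - T'.l2p (F0 x) (F0 y)
  A3 : ∀ (x : L0) (a : Lm),
      Fm (T.l2m x a) = - F2 (T.l1 a) x + T'.l2m (F0 x) (Fm a)
  A4 : ∀ x y z,
      Fm (T.l3 x y z) + F2 (T.l2p x y) z + F2 (T.l2p y z) x + F2 (T.l2p z x) y
        = T'.l3 (F0 x) (F0 y) (F0 z)
          + T'.l2m (F0 x) (F2 y z) + T'.l2m (F0 y) (F2 z x) + T'.l2m (F0 z) (F2 x y)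

/-- On a 2-plectic manifold `(M,ω)`, the map
`I = (id, f ↦ (f,(0,0)), 0)` is an injective strict Lie 2-morphism from
Rogers's Lie 2-algebra `L²(M,ω)` to Delgado's `D̃²(M,ω)`, and
`Φ = (id, pr₁, 0)` is a surjective Lie 2-morphism the other way, with
`Φ ∘ I = id`.  The geometry is abstracted: `H1` encodes Hamiltonian 1-forms
with chosen Hamiltonian vector fields (via `toForm`, `toVec`), `H0` encodes
Hamiltonian pairs `(f, v)` (via `toF`, `toV`), and `TL`, `TD` are the
Lie 2-algebras whose structure maps are the Rogers resp. Delgado formulas. -/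
theorem rogers_delgado_injection_surjection
    (X1 X2 Ω H1 H0 : Type*) [LieRing X1] [LieAlgebra ℝ X1]
    [AddCommGroup X2] [Module ℝ X2] [AddCommGroup Ω] [Module ℝ Ω]
    [AddCommGroup H1] [Module ℝ H1] [AddCommGroup H0] [Module ℝ H0]
    (d : Ω →ₗ[ℝ] Ω) (ι1 : X1 →ₗ[ℝ] Module.End ℝ Ω) (ι2 : X2 →ₗ[ℝ] Module.End ℝ Ω)
    (b : X1 →ₗ[ℝ] X2 →ₗ[ℝ] X2) (ω : Ω)
    (toForm : H1 →ₗ[ℝ] Ω) (toVec : H1 →ₗ[ℝ] X1)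
    (toF : H0 →ₗ[ℝ] Ω) (toV : H0 →ₗ[ℝ] X2)
    (hH1ham : ∀ p : H1, d (toForm p) = - ι1 (toVec p) ω)
    (hH0ham : ∀ q : H0, d (toF q) = - ι2 (toV q) ω)
    (hH1inj : ∀ p q : H1, toForm p = toForm q → toVec p = toVec q → p = q)
    (hH0inj : ∀ p q : H0, toF p = toF q → toV p = toV q → p = q)
    -- Rogers's Lie 2-algebra `L²(M,ω)` :
    (TL : LieTwoAlgebra Ω H1)
    (hTL1 : ∀ f : Ω, toForm (TL.l1 f) = d f ∧ toVec (TL.l1 f) = 0)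
    (hTL2p : ∀ p q : H1, toForm (TL.l2p p q) = ι1 (toVec q) (ι1 (toVec p) ω)
        ∧ toVec (TL.l2p p q) = ⁅toVec p, toVec q⁆)
    (hTL2m : ∀ (p : H1) (f : Ω), TL.l2m p f = 0)
    (hTL3 : ∀ p q r : H1,
        TL.l3 p q r = - ι1 (toVec r) (ι1 (toVec q) (ι1 (toVec p) ω)))
    -- Delgado's Lie 2-algebra `D̃²(M,ω)` :
    (TD : LieTwoAlgebra (Ω × H0) H1)
    (hTD1 : ∀ fq : Ω × H0, toForm (TD.l1 fq) = d fq.1 ∧ toVec (TD.l1 fq) = 0)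
    (hTD2p : ∀ p q : H1, TD.l2p p q = TL.l2p p q)
    (hTD2m : ∀ (p : H1) (fq : Ω × H0),
        (TD.l2m p fq).1 = 0
          ∧ toF (TD.l2m p fq).2 = - ι1 (toVec p) (ι2 (toV fq.2) ω)
          ∧ toV (TD.l2m p fq).2 = b (toVec p) (toV fq.2))
    (hTD3 : ∀ p q r : H1,
        (TD.l3 p q r).1 = - ι1 (toVec r) (ι1 (toVec q) (ι1 (toVec p) ω))
          ∧ (TD.l3 p q r).2 = 0) :
    ∃ (I : LieTwoMorphism TL TD) (Φ : LieTwoMorphism TD TL),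
      (∀ p : H1, I.F0 p = p) ∧ (∀ f : Ω, I.Fm f = (f, 0))
        ∧ (∀ p q : H1, I.F2 p q = 0)
        ∧ Function.Injective (⇑I.F0) ∧ Function.Injective (⇑I.Fm)
        ∧ (∀ p : H1, Φ.F0 p = p) ∧ (∀ fq : Ω × H0, Φ.Fm fq = fq.1)
        ∧ (∀ p q : H1, Φ.F2 p q = 0)
        ∧ Function.Surjective (⇑Φ.F0) ∧ Function.Surjective (⇑Φ.Fm)
        ∧ (∀ f : Ω, Φ.Fm (I.Fm f) = f) ∧ (∀ p : H1, Φ.F0 (I.F0 p) = p) := by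

  -- auxiliary facts
  have hH0zero : ∀ q : H0, toF q = 0 → toV q = 0 → q = 0 := fun q h1 h2 =>
    hH0inj q 0 (by simp [h1]) (by simp [h2])
  have hl1 : ∀ f : Ω, TD.l1 (f, 0) = TL.l1 f := by
    intro f
    apply hH1inj
    · rw [(hTD1 (f, 0)).1, (hTL1 f).1]
    · rw [(hTD1 (f, 0)).2, (hTL1 f).2]
  have hl1' : ∀ fq : Ω × H0, TL.l1 fq.1 = TD.l1 fq := by
    intro fq
    apply hH1inj
    · rw [(hTD1 fq).1, (hTL1 fq.1).1]
    · rw [(hTD1 fq).2, (hTL1 fq.1).2]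
  have hl2m0 : ∀ (x : H1) (a : Ω), TD.l2m x (a, 0) = 0 := by
    intro x a
    have h := hTD2m x (a, 0)
    have h2 : (TD.l2m x (a, 0)).2 = 0 := by
      apply hH0zero
      · rw [h.2.1]; simp
      · rw [h.2.2]; simp
    exact Prod.ext h.1 h2
  have hl3 : ∀ x y z : H1, (TL.l3 x y z, (0 : H0)) = TD.l3 x y z := by
    intro x y z
    refine Prod.ext ?_ ((hTD3 x y z).2).symm
    rw [(hTD3 x y z).1, hTL3 x y z]
  refine ⟨⟨LinearMap.id, LinearMap.inl ℝ Ω H0, 0, ?_, ?_, ?_, ?_, ?_⟩,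
      ⟨LinearMap.id, LinearMap.fst ℝ Ω H0, 0, ?_, ?_, ?_, ?_, ?_⟩,
      ?_, ?_, ?_, ?_, ?_, ?_, ?_, ?_, ?_, ?_, ?_, ?_⟩
  · intro x y; simp
  · intro a; exact hl1 a
  · intro x y; simp [hTD2p]
  · intro x a
    simp only [LinearMap.zero_apply, neg_zero, zero_add, LinearMap.id_coe, id_eq]
    rw [hTL2m x a]
    simp [hl2m0]
  · intro x y z
    simp only [LinearMap.zero_apply, add_zero, LinearMap.id_coe, id_eq]
    rw [show (LinearMap.inl ℝ Ω H0) (TL.l3 x y z) = (TL.l3 x y z, (0:H0)) from rfl,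
      hl3 x y z]
    simp [hl2m0]
  · intro x y; simp
  · intro a; exact hl1' a
  · intro x y; simp [hTD2p]
  · intro x fq
    simp only [LinearMap.zero_apply, neg_zero, zero_add, LinearMap.id_coe, id_eq]
    rw [show (LinearMap.fst ℝ Ω H0) (TD.l2m x fq) = (TD.l2m x fq).1 from rfl,
      (hTD2m x fq).1, hTL2m]
  · intro x y z
    simp only [LinearMap.zero_apply, add_zero, LinearMap.id_coe, id_eq]
    rw [show (LinearMap.fst ℝ Ω H0) (TD.l3 x y z) = (TD.l3 x y z).1 from rfl,
      (hTD3 x y z).1, hTL3]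
    simp [hTL2m]
  · intro p; rfl
  · intro f; rfl
  · intro p q; rfl
  · intro p q h; exact h
  · intro p q h; exact congrArg Prod.fst h
  · intro p; rfl
  · intro fq; rfl
  · intro p q; rfl
  · intro p; exact ⟨p, rfl⟩
  · intro f; exact ⟨(f, 0), rfl⟩
  · intro f; rfl
  · intro p; rfl
end

section
/- Let $(M,\omega)$ be a 2-plectic manifold. The strict map $\Psi = (\Psi_1, \Psi_2 = 0)$ from $\mathsf{\widetilde{D^2(M,\omega)}}$ to the Lie 2-algebra $\mathfrak{X}^2(M)\oplus\mathfrak{X}^1(M)$ (with vanishing $\nu_1,\nu_3$ and Schouten bracket $\nu_2$) defined by $\Psi_{1,0}(\alpha) = X_\alpha$, $\Psi_{1,-1}(\tilde{f},(f,v)) = v$, is a Lie 2-algebra morphism: in particular $\Psi_{1,0}(\iota_{X_\alpha\wedge X_\beta}\omega) = [X_\alpha, X_\beta]_S$ and $\Psi_{1,-1}(\tilde{l}_2^m((\tilde{f},(f,v)),\alpha)) = [v, X_\alpha]_S = [\Psi_{1,-1}(\tilde{f},(f,v)), \Psi_{1,0}(\alpha)]_S$. -/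
/-- The strict 2-plectic gradient `Ψ = (Ψ₁, Ψ₂ = 0)` with
`Ψ₁,₀(α) = X_α` and `Ψ₁,₋₁(f̃,(f,v)) = v` is a Lie 2-algebra morphism from
Delgado's `D̃²(M,ω)` to the Schouten Lie 2-algebra `𝔛²(M) ⊕ 𝔛¹(M)`; in
particular `Ψ₁,₀(ι_{Xα∧Xβ}ω) = [Xα,Xβ]_S` and
`Ψ₁,₋₁(l̃₂ᵐ((f̃,(f,v)),α)) = [v,Xα]_S = [Ψ₁,₋₁(f̃,(f,v)), Ψ₁,₀(α)]_S`
(encoded here via `b X v = [X,v]_S = -[v,X]_S`). -/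
theorem two_plectic_gradient_is_morphism
    (X1 X2 Ω H1 H0 : Type*) [LieRing X1] [LieAlgebra ℝ X1]
    [AddCommGroup X2] [Module ℝ X2] [AddCommGroup Ω] [Module ℝ Ω]
    [AddCommGroup H1] [Module ℝ H1] [AddCommGroup H0] [Module ℝ H0]
    (d : Ω →ₗ[ℝ] Ω) (ι1 : X1 →ₗ[ℝ] Module.End ℝ Ω) (ι2 : X2 →ₗ[ℝ] Module.End ℝ Ω)
    (b : X1 →ₗ[ℝ] X2 →ₗ[ℝ] X2) (ω : Ω)
    (toForm : H1 →ₗ[ℝ] Ω) (toVec : H1 →ₗ[ℝ] X1)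
    (toF : H0 →ₗ[ℝ] Ω) (toV : H0 →ₗ[ℝ] X2)
    (hH1ham : ∀ p : H1, d (toForm p) = - ι1 (toVec p) ω)
    (hH0ham : ∀ q : H0, d (toF q) = - ι2 (toV q) ω)
    -- Delgado's Lie 2-algebra `D̃²(M,ω)` :
    (TD : LieTwoAlgebra (Ω × H0) H1)
    (hTD1 : ∀ fq : Ω × H0, toForm (TD.l1 fq) = d fq.1 ∧ toVec (TD.l1 fq) = 0)
    (hTD2p : ∀ p q : H1, toForm (TD.l2p p q) = ι1 (toVec q) (ι1 (toVec p) ω)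
        ∧ toVec (TD.l2p p q) = ⁅toVec p, toVec q⁆)
    (hTD2m : ∀ (p : H1) (fq : Ω × H0),
        (TD.l2m p fq).1 = 0
          ∧ toF (TD.l2m p fq).2 = - ι1 (toVec p) (ι2 (toV fq.2) ω)
          ∧ toV (TD.l2m p fq).2 = b (toVec p) (toV fq.2))
    (hTD3 : ∀ p q r : H1,
        (TD.l3 p q r).1 = - ι1 (toVec r) (ι1 (toVec q) (ι1 (toVec p) ω))
          ∧ (TD.l3 p q r).2 = 0)
    -- the Schouten Lie 2-algebra `𝔛²(M) ⊕ 𝔛¹(M)` :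
    (TS : LieTwoAlgebra X2 X1)
    (hTS1 : ∀ v : X2, TS.l1 v = 0) (hTS2p : ∀ x y : X1, TS.l2p x y = ⁅x, y⁆)
    (hTS2m : ∀ (x : X1) (v : X2), TS.l2m x v = b x v)
    (hTS3 : ∀ x y z : X1, TS.l3 x y z = 0) :
    ∃ Ψ : LieTwoMorphism TD TS,
      (∀ p : H1, Ψ.F0 p = toVec p) ∧ (∀ fq : Ω × H0, Ψ.Fm fq = toV fq.2)
        ∧ (∀ p q : H1, Ψ.F2 p q = 0)
        ∧ (∀ p q : H1, Ψ.F0 (TD.l2p p q) = ⁅toVec p, toVec q⁆)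
        ∧ (∀ (p : H1) (fq : Ω × H0),
            Ψ.Fm (TD.l2m p fq) = b (toVec p) (toV fq.2)
              ∧ Ψ.Fm (TD.l2m p fq) = TS.l2m (Ψ.F0 p) (Ψ.Fm fq)) := by
  refine ⟨{ F0 := toVec
            Fm := toV.comp (LinearMap.snd ℝ Ω H0)
            F2 := 0
            F2_anti := by intro x y; simp
            A1 := by intro a; simp [hTS1, (hTD1 a).2]
            A2 := by
              intro x y
              simp [hTS1, hTS2p, (hTD2p x y).2]
            A3 := by
              intro x a
              simp [hTS2m, (hTD2m x a).2.2]
            A4 := by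
              intro x y z
              simp [hTS3, hTS2m, (hTD3 x y z).2] },
    fun p => rfl, fun fq => rfl, fun p q => rfl,
    fun p q => (hTD2p p q).2,
    fun p fq => ⟨(hTD2m p fq).2.2, by
      simp [hTS2m, (hTD2m p fq).2.2]⟩⟩
end
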